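/- For every X ∈ F, N(X) = ‖V₊(X)^{1/4} Γ₊(X) V₊(X)^{1/4}‖_F² + ‖V₋(X)^{1/4} Γ₋(X) V₋(X)^{1/4}‖_F²; in particular N(X) ≥ 0. -/

import Mathlib

set_option autoImplicit false

open Matrix Set Filter

attribute [local instance] Matrix.normedAddCommGroup Matrix.normedSpace

namespace BoxSDP

open scoped Classical

/-- Trace inner product `⟨A|B⟩ = Trace(Aᵀ B)`. -/
noncomputable def mip {m k : Type*} [Fintype m] [Fintype k]
    (A B : Matrix m k ℝ) : ℝ :=
  (Aᵀ * B).trace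

/-- Frobenius norm `‖A‖_F = √⟨A|A⟩`. -/
noncomputable def fnorm {m k : Type*} [Fintype m] [Fintype k]
    (A : Matrix m k ℝ) : ℝ :=
  Real.sqrt (mip A A)

/-- The feasible set `F = {X : O ⪯ X ⪯ I}` (membership forces symmetry). -/
def Feas (n : ℕ) : Set (Matrix (Fin n) (Fin n) ℝ) :=
  {X | X.PosSemidef ∧ (1 - X).PosSemidef}

/-- Square root of a positive semidefinite matrix (junk value `0` otherwise);
agrees with `A^{1/2} = Q K^{1/2} Qᵀ` on positive semidefinite matrices. -/
noncomputable def psqrt {m : Type*} [Fintype m] [DecidableEq m]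
    (A : Matrix m m ℝ) : Matrix m m ℝ :=
  if h : A.PosSemidef then
    (h.1.eigenvectorUnitary : Matrix m m ℝ) * diagonal ((↑) ∘ Real.sqrt ∘ h.1.eigenvalues) *
      (star h.1.eigenvectorUnitary : Matrix m m ℝ)
  else 0

/-- Fourth root `A^{1/4}` of a positive semidefinite matrix. -/
noncomputable def proot4 {m : Type*} [Fintype m] [DecidableEq m]
    (A : Matrix m m ℝ) : Matrix m m ℝ :=
  psqrt (psqrt A)

/-- The 2-norm of a symmetric matrix: its largest absolute eigenvalue. -/
noncomputable def norm2 {m : Type*} [Fintype m] [DecidableEq m]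
    (A : Matrix m m ℝ) : ℝ :=
  if h : A.IsHermitian then sSup (Set.range fun i => |h.eigenvalues i|) else 0

/-- The linear functional `H ↦ ⟨G|H⟩`, as a continuous linear map; a function
`f` has gradient matrix `G` at `X` iff `HasFDerivAt f (gradCLM G) X`. -/
noncomputable def gradCLM {n : ℕ} (G : Matrix (Fin n) (Fin n) ℝ) :
    Matrix (Fin n) (Fin n) ℝ →L[ℝ] ℝ :=
  LinearMap.toContinuousLinearMap
    { toFun := fun H => mip G H
      map_add' := fun x y => by
        simp [mip, Matrix.mul_add]
      map_smul' := fun c x => by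
        simp [mip, Matrix.mul_smul] }

/-- The Hessian bilinear form `⟨A | ∇²f(X) | B⟩` induced by the derivative
`hessOp` of the gradient map. -/
noncomputable def hform {n : ℕ}
    (hessOp : Matrix (Fin n) (Fin n) ℝ →L[ℝ] Matrix (Fin n) (Fin n) ℝ)
    (A B : Matrix (Fin n) (Fin n) ℝ) : ℝ :=
  mip A (hessOp B)

/-- `underline-f`: the minimum of `⟨G | Y − X̂⟩` over `Y ∈ F`. -/
noncomputable def underf {n : ℕ} (G Xh : Matrix (Fin n) (Fin n) ℝ) : ℝ :=
  sInf ((fun Y => mip G (Y - Xh)) '' Feas n)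

/-- First-order optimality condition at `Xs` for gradient matrix `G`. -/
def FirstOrderOpt {n : ℕ} (G Xs : Matrix (Fin n) (Fin n) ℝ) : Prop :=
  ∀ X ∈ Feas n, 0 ≤ mip G (X - Xs)

/-- A fixed eigenvalue decomposition `G = P Γ Pᵀ` of a symmetric matrix `G`,
with eigenvalues in descending order, split into the block `Pp, gp` of
positive eigenvalues and the block `Pm, gm` of nonpositive eigenvalues. -/
structure SpecDecomp (n : ℕ) (G : Matrix (Fin n) (Fin n) ℝ) where
  np : ℕ
  nm : ℕ
  hdim : np + nm = n
  Pp : Matrix (Fin n) (Fin np) ℝ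
  Pm : Matrix (Fin n) (Fin nm) ℝ
  gp : Fin np → ℝ
  gm : Fin nm → ℝ
  hgp_pos : ∀ i, 0 < gp i
  hgm_nonpos : ∀ j, gm j ≤ 0
  hgp_anti : ∀ i j : Fin np, i ≤ j → gp j ≤ gp i
  hgm_anti : ∀ i j : Fin nm, i ≤ j → gm j ≤ gm i
  hPp_orth : Ppᵀ * Pp = 1
  hPm_orth : Pmᵀ * Pm = 1
  hPpPm : Ppᵀ * Pm = 0
  hPPT : Pp * Ppᵀ + Pm * Pmᵀ = 1
  hG : G = Pp * Matrix.diagonal gp * Ppᵀ + Pm * Matrix.diagonal gm * Pmᵀ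

namespace SpecDecomp

variable {n : ℕ} {G : Matrix (Fin n) (Fin n) ℝ}

/-- `V₊(X) = P₊ᵀ X P₊`. -/
def Vp (sd : SpecDecomp n G) (X : Matrix (Fin n) (Fin n) ℝ) :
    Matrix (Fin sd.np) (Fin sd.np) ℝ :=
  sd.Ppᵀ * X * sd.Pp

/-- `V₋(X) = P₋ᵀ (I − X) P₋`. -/
def Vm (sd : SpecDecomp n G) (X : Matrix (Fin n) (Fin n) ℝ) :
    Matrix (Fin sd.nm) (Fin sd.nm) ℝ :=
  sd.Pmᵀ * (1 - X) * sd.Pm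

/-- The search direction `D(X) = P M Pᵀ` with blocks
`M₁₁ = V₊^{1/2} Γ₊ V₊^{1/2}`, `M₁₂ = γ_max P₊ᵀ X P₋`,
`M₂₁ = γ_max P₋ᵀ X P₊`, `M₂₂ = V₋^{1/2} Γ₋ V₋^{1/2}`. -/
noncomputable def Dmat (sd : SpecDecomp n G) (X : Matrix (Fin n) (Fin n) ℝ) :
    Matrix (Fin n) (Fin n) ℝ :=
  sd.Pp * (psqrt (sd.Vp X) * Matrix.diagonal sd.gp * psqrt (sd.Vp X)) * sd.Ppᵀ
    + norm2 G • (sd.Pp * (sd.Ppᵀ * X * sd.Pm) * sd.Pmᵀ)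
    + norm2 G • (sd.Pm * (sd.Pmᵀ * X * sd.Pp) * sd.Ppᵀ)
    + sd.Pm * (psqrt (sd.Vm X) * Matrix.diagonal sd.gm * psqrt (sd.Vm X)) * sd.Pmᵀ

/-- `N(X) = ⟨G | D(X)⟩`. -/
noncomputable def Nval (sd : SpecDecomp n G) (X : Matrix (Fin n) (Fin n) ℝ) : ℝ :=
  mip G (sd.Dmat X)

end SpecDecomp

/-! Since `∇f(X) P₊ = P₊ Γ₊`, `∇f(X) P₋ = P₋ Γ₋` and `P₋ᵀ P₊ = 0`, pairing `∇f(X)` with `D(X)`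
annihilates the off-diagonal blocks (so `γ_max` drops out) and leaves
`Tr(Γ₊ V₊^{1/2} Γ₊ V₊^{1/2}) + Tr(Γ₋ V₋^{1/2} Γ₋ V₋^{1/2})`. Writing `V^{1/2} = V^{1/4} V^{1/4}`
and cycling the trace turns each summand into `‖V^{1/4} Γ V^{1/4}‖_F²`. -/

section SquareRoot

variable {m : Type*} [Fintype m] [DecidableEq m]

open scoped MatrixOrder in
lemma psqrt_eq_cfcSqrt {A : Matrix m m ℝ} (hA : A.PosSemidef) : psqrt A = CFC.sqrt A := by
  rw [CFC.sqrt_eq_real_sqrt A hA.nonneg, cfcₙ_eq_cfc, hA.1.cfc_eq, IsHermitian.cfc, psqrt,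
    dif_pos hA]
  simp only [RCLike.ofReal_real_eq_id, CompTriple.comp_eq, Unitary.conjStarAlgAut_apply]
  rfl

open scoped MatrixOrder in
lemma posSemidef_psqrt {A : Matrix m m ℝ} (hA : A.PosSemidef) : (psqrt A).PosSemidef := by
  rw [psqrt_eq_cfcSqrt hA]
  exact (CFC.sqrt_nonneg A).posSemidef

open scoped MatrixOrder in
lemma psqrt_mul_psqrt {A : Matrix m m ℝ} (hA : A.PosSemidef) : psqrt A * psqrt A = A := by
  rw [psqrt_eq_cfcSqrt hA]
  exact CFC.sqrt_mul_sqrt_self A hA.nonneg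

end SquareRoot

lemma fnorm_sq {m k : Type*} [Fintype m] [Fintype k] (A : Matrix m k ℝ) :
    fnorm A ^ 2 = mip A A := by
  have hA : 0 ≤ mip A A := by
    simpa [mip, conjTranspose_eq_transpose_of_trivial] using
      (posSemidef_conjTranspose_mul_self A).trace_nonneg
  rw [fnorm, Real.sq_sqrt hA]

lemma trace_mul_psqrt_conj_eq_fnorm_sq {m : Type*} [Fintype m] [DecidableEq m]
    {V : Matrix m m ℝ} (hV : V.PosSemidef) {B : Matrix m m ℝ} (hB : B.IsSymm) :
    (B * (psqrt V * B * psqrt V)).trace = fnorm (proot4 V * B * proot4 V) ^ 2 := by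
  set R := proot4 V
  have hRR : R * R = psqrt V := psqrt_mul_psqrt (posSemidef_psqrt hV)
  have hRT : Rᵀ = R :=
    (isHermitian_iff_isSymm.mp (posSemidef_psqrt (posSemidef_psqrt hV)).isHermitian).eq
  have hsymm : (R * B * R)ᵀ = R * B * R := by
    rw [transpose_mul, transpose_mul, hRT, hB.eq, Matrix.mul_assoc]
  rw [fnorm_sq, mip, hsymm, ← hRR]
  calc (B * (R * R * B * (R * R))).trace
      = ((B * R * R * B * R) * R).trace := by simp only [Matrix.mul_assoc]
    _ = (R * (B * R * R * B * R)).trace := trace_mul_comm _ _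
    _ = (R * B * R * (R * B * R)).trace := by simp only [Matrix.mul_assoc]

section Conjugation

variable {R : Type*} [CommRing R] {m k l : Type*} [Fintype m] [Fintype k] [Fintype l]
  {G : Matrix m m R} {P : Matrix m k R} {Λ : Matrix k k R}

lemma trace_mul_conj_of_mul_eq [DecidableEq k] (hGP : G * P = P * Λ) (hP : Pᵀ * P = 1)
    (S : Matrix k k R) :
    (G * (P * S * Pᵀ)).trace = (Λ * S).trace := by
  calc (G * (P * S * Pᵀ)).trace
      = (P * (Λ * S) * Pᵀ).trace := by simp only [← Matrix.mul_assoc, hGP]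
    _ = (Pᵀ * P * (Λ * S)).trace := by rw [trace_mul_comm, Matrix.mul_assoc]
    _ = (Λ * S).trace := by rw [hP, Matrix.one_mul]

lemma trace_mul_cross_eq_zero {Q : Matrix m l R} (hGP : G * P = P * Λ) (hQP : Qᵀ * P = 0)
    (B : Matrix k l R) : (G * (P * B * Qᵀ)).trace = 0 := by
  calc (G * (P * B * Qᵀ)).trace
      = (P * (Λ * B) * Qᵀ).trace := by simp only [← Matrix.mul_assoc, hGP]
    _ = (Qᵀ * P * (Λ * B)).trace := by rw [trace_mul_comm, Matrix.mul_assoc]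
    _ = 0 := by rw [hQP, Matrix.zero_mul, trace_zero]

end Conjugation

namespace SpecDecomp

variable {n : ℕ} {G : Matrix (Fin n) (Fin n) ℝ}

lemma isSymm (sd : SpecDecomp n G) : G.IsSymm := by
  rw [IsSymm, sd.hG]
  simp only [transpose_add, transpose_mul, transpose_transpose, diagonal_transpose,
    Matrix.mul_assoc]

variable (sd : SpecDecomp n G)

lemma transpose_Pm_mul_Pp : sd.Pmᵀ * sd.Pp = 0 := by
  simpa [transpose_mul] using congrArg transpose sd.hPpPm

lemma mul_Pp : G * sd.Pp = sd.Pp * diagonal sd.gp := by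
  conv_lhs => arg 1; rw [sd.hG]
  simp only [Matrix.add_mul, Matrix.mul_assoc, sd.hPp_orth, sd.transpose_Pm_mul_Pp,
    Matrix.mul_zero, Matrix.mul_one, add_zero]

lemma mul_Pm : G * sd.Pm = sd.Pm * diagonal sd.gm := by
  conv_lhs => arg 1; rw [sd.hG]
  simp only [Matrix.add_mul, Matrix.mul_assoc, sd.hPm_orth, sd.hPpPm,
    Matrix.mul_zero, Matrix.mul_one, zero_add]

lemma Vp_posSemidef {X : Matrix (Fin n) (Fin n) ℝ} (hX : X.PosSemidef) :
    (sd.Vp X).PosSemidef := by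
  simpa [conjTranspose_eq_transpose_of_trivial, Vp] using hX.conjTranspose_mul_mul_same sd.Pp

lemma Vm_posSemidef {X : Matrix (Fin n) (Fin n) ℝ} (hX : (1 - X).PosSemidef) :
    (sd.Vm X).PosSemidef := by
  simpa [conjTranspose_eq_transpose_of_trivial, Vm] using hX.conjTranspose_mul_mul_same sd.Pm

lemma Nval_eq_trace_add_trace (X : Matrix (Fin n) (Fin n) ℝ) :
    sd.Nval X =
      (diagonal sd.gp * (psqrt (sd.Vp X) * diagonal sd.gp * psqrt (sd.Vp X))).trace
        + (diagonal sd.gm * (psqrt (sd.Vm X) * diagonal sd.gm * psqrt (sd.Vm X))).trace := by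
  rw [Nval, Dmat, mip, sd.isSymm.eq]
  simp only [Matrix.mul_add, Matrix.mul_smul, trace_add, trace_smul,
    trace_mul_conj_of_mul_eq sd.mul_Pp sd.hPp_orth, trace_mul_conj_of_mul_eq sd.mul_Pm sd.hPm_orth,
    trace_mul_cross_eq_zero sd.mul_Pp sd.transpose_Pm_mul_Pp,
    trace_mul_cross_eq_zero sd.mul_Pm sd.hPpPm, smul_zero, add_zero]

end SpecDecomp

theorem Nval_eq_sum_fnorm_sq_general {n : ℕ}
    (grad : Matrix (Fin n) (Fin n) ℝ → Matrix (Fin n) (Fin n) ℝ)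
    (X : Matrix (Fin n) (Fin n) ℝ) (hX : X ∈ Feas n)
    (sd : SpecDecomp n (grad X)) :
    sd.Nval X =
      fnorm (proot4 (sd.Vp X) * Matrix.diagonal sd.gp * proot4 (sd.Vp X)) ^ 2
        + fnorm (proot4 (sd.Vm X) * Matrix.diagonal sd.gm * proot4 (sd.Vm X)) ^ 2
      ∧ 0 ≤ sd.Nval X := by
  rw [sd.Nval_eq_trace_add_trace,
    trace_mul_psqrt_conj_eq_fnorm_sq (sd.Vp_posSemidef hX.1) (isSymm_diagonal _),
    trace_mul_psqrt_conj_eq_fnorm_sq (sd.Vm_posSemidef hX.2) (isSymm_diagonal _)]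
  exact ⟨rfl, by positivity⟩

theorem Nval_eq_sum_fnorm_sq {n : ℕ}
    (f : Matrix (Fin n) (Fin n) ℝ → ℝ)
    (grad : Matrix (Fin n) (Fin n) ℝ → Matrix (Fin n) (Fin n) ℝ)
    (hgradsym : ∀ X ∈ Feas n, (grad X).IsSymm)
    (hgrad : ∀ X ∈ Feas n, HasFDerivAt f (gradCLM (grad X)) X)
    (X : Matrix (Fin n) (Fin n) ℝ) (hX : X ∈ Feas n)
    (sd : SpecDecomp n (grad X)) :
    sd.Nval X =
      fnorm (proot4 (sd.Vp X) * Matrix.diagonal sd.gp * proot4 (sd.Vp X)) ^ 2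
        + fnorm (proot4 (sd.Vm X) * Matrix.diagonal sd.gm * proot4 (sd.Vm X)) ^ 2
      ∧ 0 ≤ sd.Nval X :=
  Nval_eq_sum_fnorm_sq_general grad X hX sd

end BoxSDP
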